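/- Under the gradient descent setup with w₀ = 0, 0 < η < 1/σ_max², and Alignment(Φ, y, τ) = δ for 0 < τ ≤ σ_max, the reduction in loss after t iterations satisfies ℓ(w₀) − ℓ(w_t) ≥ δ(1 − (1 − ητ²)^{2t}) ≥ δ(1 − exp(−2tητ²)). -/

import Mathlib

open Matrix Finset

/-!
In the basis of left singular vectors the residual `r_t = Φ w_t - y` of gradient descent
evolves coordinatewise, `(Uᵀ r_t)_i = (1 - η σ_i²)^t (Uᵀ r_0)_i` (with `σ_i = 0` for `i ≥ d`),
and `r_0 = -y`. As `Uᵀ` is an isometry, the loss reduction is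
`∑_i (1 - (1 - η σ_i²)^{2t}) (u_iᵀ y)²`. Every term is nonnegative because
`0 ≤ 1 - η σ_i² ≤ 1` when `η σ_max² < 1`, and the terms with `σ_i ≥ τ` are at least
`(1 - (1 - η τ²)^{2t}) (u_iᵀ y)²`. The exponential bound is `1 - x ≤ exp (-x)`.
-/

section

variable {R : Type*} [CommRing R] {m k : Type*} [Fintype k]

theorem gradientDescent_residual_succ [Fintype m] (Φ : Matrix m k R) (y : m → R) (η : R)
    (w : k → R) :
    Φ *ᵥ (w - η • Φᵀ *ᵥ (Φ *ᵥ w - y)) - y =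
      (Φ *ᵥ w - y) - η • (Φ * Φᵀ) *ᵥ (Φ *ᵥ w - y) := by
  rw [mulVec_sub, mulVec_smul, mulVec_mulVec]
  abel

theorem mul_transpose_eq_of_eq_mul_mul_transpose {m' k' : Type*} [Fintype m'] [Fintype k']
    [DecidableEq k'] {Φ : Matrix m k R} {U : Matrix m m' R} {S : Matrix m' k' R}
    {V : Matrix k k' R} (hV : Vᵀ * V = 1) (hΦ : Φ = U * S * Vᵀ) :
    Φ * Φᵀ = U * (S * Sᵀ) * Uᵀ := by
  rw [hΦ, transpose_mul, transpose_mul, transpose_transpose]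
  calc U * S * Vᵀ * (V * (Sᵀ * Uᵀ)) = U * S * (Vᵀ * V) * Sᵀ * Uᵀ := by
        simp only [Matrix.mul_assoc]
    _ = U * (S * Sᵀ) * Uᵀ := by rw [hV, Matrix.mul_one, Matrix.mul_assoc U]

variable [Fintype m] [DecidableEq m] {U : Matrix m m R}

theorem sum_sq_transpose_mulVec (hU : U * Uᵀ = 1) (v : m → R) :
    ∑ i, (Uᵀ *ᵥ v) i ^ 2 = ∑ i, v i ^ 2 := by
  have h : (Uᵀ *ᵥ v) ⬝ᵥ (Uᵀ *ᵥ v) = v ⬝ᵥ v := by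
    rw [dotProduct_mulVec, vecMul_transpose, mulVec_mulVec, hU, one_mulVec]
  simpa only [dotProduct, sq] using h

theorem transpose_mulVec_eq_pow_mul (hU : Uᵀ * U = 1) (μ : m → R) (η : R) (r : ℕ → m → R)
    (hr : ∀ t, r (t + 1) = r t - η • (U * diagonal μ * Uᵀ) *ᵥ r t) (t : ℕ) (i : m) :
    (Uᵀ *ᵥ r t) i = (1 - η * μ i) ^ t * (Uᵀ *ᵥ r 0) i := by
  induction t with
  | zero => simp
  | succ t ih =>
    have hrot : Uᵀ *ᵥ r (t + 1) = Uᵀ *ᵥ r t - η • diagonal μ *ᵥ (Uᵀ *ᵥ r t) := by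
      rw [hr, mulVec_sub, mulVec_smul, mulVec_mulVec, mulVec_mulVec, ← Matrix.mul_assoc,
        ← Matrix.mul_assoc, hU, Matrix.one_mul]
    rw [hrot, Pi.sub_apply, Pi.smul_apply, mulVec_diagonal, ih, smul_eq_mul]
    ring

end

def rectDiagonal {R : Type*} [Zero R] (n : ℕ) {d : ℕ} (σ : Fin d → R) :
    Matrix (Fin n) (Fin d) R :=
  of fun i j => if (i : ℕ) = (j : ℕ) then σ j else 0

def paddedSq {R : Type*} [Monoid R] [Zero R] (n : ℕ) {d : ℕ} (σ : Fin d → R) : Fin n → R :=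
  fun i => if h : (i : ℕ) < d then σ ⟨i, h⟩ ^ 2 else 0

theorem rectDiagonal_mul_transpose {R : Type*} [CommSemiring R] (n : ℕ) {d : ℕ}
    (σ : Fin d → R) : rectDiagonal n σ * (rectDiagonal n σ)ᵀ = diagonal (paddedSq n σ) := by
  ext i j
  simp only [rectDiagonal, paddedSq, mul_apply, transpose_apply, of_apply, diagonal_apply]
  by_cases hij : i = j
  · subst hij
    by_cases h : (i : ℕ) < d
    · rw [if_pos rfl, dif_pos h, sum_eq_single ⟨i, h⟩]
      · simp [sq]
      · intro l _ hl
        rw [if_neg (fun e => hl (Fin.ext e.symm)), zero_mul]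
      · simp
    · rw [if_pos rfl, dif_neg h]
      exact sum_eq_zero fun l _ => by rw [if_neg (by omega), zero_mul]
  · rw [if_neg hij]
    refine sum_eq_zero fun l _ => ?_
    split_ifs with hi hj <;> first | simp | exact absurd (Fin.ext (hi.trans hj.symm)) hij

theorem paddedSq_castLE {R : Type*} [Monoid R] [Zero R] {n d : ℕ} (h : d ≤ n)
    (σ : Fin d → R) (i : Fin d) : paddedSq n σ (Fin.castLE h i) = σ i ^ 2 := by
  simp [paddedSq]

theorem one_sub_mul_paddedSq_mem_Icc {d : ℕ} {σ : Fin d → ℝ} {M η : ℝ} (h0 : ∀ j, 0 ≤ σ j)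
    (hM : ∀ j, σ j ≤ M) (hη : 0 ≤ η) (hηM : η * M ^ 2 ≤ 1) (n : ℕ) (i : Fin n) :
    1 - η * paddedSq n σ i ∈ Set.Icc 0 1 := by
  have hpad : 0 ≤ paddedSq n σ i ∧ paddedSq n σ i ≤ M ^ 2 := by
    unfold paddedSq
    split_ifs
    exacts [⟨sq_nonneg _, pow_le_pow_left₀ (h0 _) (hM _) 2⟩, ⟨le_rfl, sq_nonneg M⟩]
  constructor <;> nlinarith [hpad.1, hpad.2]

theorem gradientDescent_transpose_mulVec_residual {R : Type*} [CommRing R] {n d : ℕ}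
    {Φ : Matrix (Fin n) (Fin d) R} {U : Matrix (Fin n) (Fin n) R}
    {V : Matrix (Fin d) (Fin d) R} {σ : Fin d → R} (hU : Uᵀ * U = 1) (hV : Vᵀ * V = 1)
    (hΦ : Φ = U * rectDiagonal n σ * Vᵀ) {η : R} {y : Fin n → R} {w : ℕ → Fin d → R}
    (hw : ∀ t, w (t + 1) = w t - η • Φᵀ *ᵥ (Φ *ᵥ w t - y)) (t : ℕ) (i : Fin n) :
    (Uᵀ *ᵥ (Φ *ᵥ w t - y)) i = (1 - η * paddedSq n σ i) ^ t * (Uᵀ *ᵥ (Φ *ᵥ w 0 - y)) i :=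
  transpose_mulVec_eq_pow_mul hU (paddedSq n σ) η (fun s => Φ *ᵥ w s - y) (fun s => by
    rw [hw, gradientDescent_residual_succ, mul_transpose_eq_of_eq_mul_mul_transpose hV hΦ,
      rectDiagonal_mul_transpose]) t i

theorem sum_sq_mul_one_sub_pow_le_sum_sq_sub {ι : Type*} [Fintype ι] {c : ι → ℝ}
    (b : ι → ℝ) {F : Finset ι} {a : ℝ} (hc0 : ∀ i, 0 ≤ c i) (hc1 : ∀ i, c i ≤ 1)
    (hF : ∀ i ∈ F, c i ≤ a) (t : ℕ) :
    (∑ i ∈ F, b i ^ 2) * (1 - a ^ (2 * t)) ≤ ∑ i, b i ^ 2 - ∑ i, (c i ^ t * b i) ^ 2 := by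
  calc (∑ i ∈ F, b i ^ 2) * (1 - a ^ (2 * t))
      ≤ ∑ i ∈ F, b i ^ 2 * (1 - c i ^ (2 * t)) := by
        rw [sum_mul]
        gcongr with i hi
        exacts [hc0 i, hF i hi]
    _ ≤ ∑ i, b i ^ 2 * (1 - c i ^ (2 * t)) :=
        sum_le_sum_of_subset_of_nonneg (subset_univ F) fun i _ _ =>
          mul_nonneg (sq_nonneg _) (sub_nonneg.2 (pow_le_one₀ (hc0 i) (hc1 i)))
    _ = ∑ i, b i ^ 2 - ∑ i, (c i ^ t * b i) ^ 2 := by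
        rw [← sum_sub_distrib]
        exact sum_congr rfl fun i _ => by ring

theorem one_sub_pow_le_exp_neg_mul {x : ℝ} (hx : x ≤ 1) (k : ℕ) :
    (1 - x) ^ k ≤ Real.exp (-(k * x)) := by
  calc (1 - x) ^ k ≤ Real.exp (-x) ^ k :=
        pow_le_pow_left₀ (sub_nonneg.2 hx) (Real.one_sub_le_exp_neg x) k
    _ = Real.exp (-(k * x)) := by rw [← Real.exp_nat_mul, mul_neg]

theorem gd_alignment_loss_reduction_rate_general
    (n d : ℕ) (hdn : d ≤ n)
    (Φ : Matrix (Fin n) (Fin d) ℝ)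
    (U : Matrix (Fin n) (Fin n) ℝ) (V : Matrix (Fin d) (Fin d) ℝ)
    (σ : Fin d → ℝ)
    (hU1 : Uᵀ * U = 1) (hU2 : U * Uᵀ = 1)
    (hV1 : Vᵀ * V = 1)
    (hΦ : Φ = U * (Matrix.of fun (i : Fin n) (j : Fin d) =>
        if (i : ℕ) = (j : ℕ) then σ j else 0) * Vᵀ)
    (hσpos : ∀ i : Fin d, 0 < σ i)
    (σmax : ℝ) (hσmax : IsGreatest (Set.range σ) σmax)
    (η : ℝ) (hη0 : 0 < η) (hη : η < 1 / σmax ^ 2)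
    (y : Fin n → ℝ)
    (w : ℕ → Fin d → ℝ) (hw0 : w 0 = 0)
    (hw : ∀ t, w (t + 1) = w t - η • (Φᵀ.mulVec (Φ.mulVec (w t) - y)))
    (τ δ : ℝ) (hτ0 : 0 < τ) (hτmax : τ ≤ σmax)
    (hδ : (∑ i ∈ Finset.univ.filter (fun i : Fin d => τ ≤ σ i),
        ((Uᵀ.mulVec y) (Fin.castLE hdn i)) ^ 2) = δ) :
    ∀ t : ℕ,
      ((∑ i, (Φ.mulVec (w 0) - y) i ^ 2) - ∑ i, (Φ.mulVec (w t) - y) i ^ 2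
          ≥ δ * (1 - (1 - η * τ ^ 2) ^ (2 * t))) ∧
      δ * (1 - (1 - η * τ ^ 2) ^ (2 * t))
          ≥ δ * (1 - Real.exp (-(2 * (t : ℝ) * η * τ ^ 2))) := by
  intro t
  have hησmax : η * σmax ^ 2 ≤ 1 :=
    ((lt_div_iff₀ (pow_pos (hτ0.trans_le hτmax) 2)).1 hη).le
  have hc := one_sub_mul_paddedSq_mem_Icc (fun j => (hσpos j).le)
    (fun j => hσmax.2 ⟨j, rfl⟩) hη0.le hησmax n
  set F := (univ.filter fun i : Fin d => τ ≤ σ i).map (Fin.castLEEmb hdn)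
  have hFδ : ∑ i ∈ F, (Uᵀ *ᵥ (Φ *ᵥ w 0 - y)) i ^ 2 = δ := by
    simp [F, hw0, mulVec_neg, ← hδ]
  have hFc : ∀ i ∈ F, 1 - η * paddedSq n σ i ≤ 1 - η * τ ^ 2 := by
    simp only [F, mem_map, mem_filter]
    rintro _ ⟨j, ⟨-, hj⟩, rfl⟩
    rw [Fin.castLEEmb_apply, paddedSq_castLE]
    nlinarith [pow_le_pow_left₀ hτ0.le hj 2]
  refine ⟨?_, ?_⟩
  · rw [ge_iff_le, ← sum_sq_transpose_mulVec hU2 (Φ *ᵥ w 0 - y),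
      ← sum_sq_transpose_mulVec hU2 (Φ *ᵥ w t - y), ← hFδ]
    simp only [gradientDescent_transpose_mulVec_residual (σ := σ) hU1 hV1 hΦ hw t]
    exact sum_sq_mul_one_sub_pow_le_sum_sq_sub _ (fun i => (hc i).1) (fun i => (hc i).2) hFc t
  · have hητ : η * τ ^ 2 ≤ 1 := le_trans (by gcongr) hησmax
    have hδ0 : 0 ≤ δ := hFδ ▸ sum_nonneg fun i _ => sq_nonneg _
    rw [ge_iff_le]
    gcongr
    exact (one_sub_pow_le_exp_neg_mul hητ (2 * t)).trans_eq (by push_cast; ring_nf)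

/-- Loss reduction after `t` iterations of gradient descent is at least
`δ(1 − (1 − ητ²)^{2t}) ≥ δ(1 − exp(−2tητ²))` where `δ = Alignment(Φ,y,τ)`. -/
theorem gd_alignment_loss_reduction_rate
    (n d : ℕ) (hdn : d ≤ n)
    (Φ : Matrix (Fin n) (Fin d) ℝ)
    (U : Matrix (Fin n) (Fin n) ℝ) (V : Matrix (Fin d) (Fin d) ℝ)
    (σ : Fin d → ℝ)
    (hU1 : Uᵀ * U = 1) (hU2 : U * Uᵀ = 1)
    (hV1 : Vᵀ * V = 1) (hV2 : V * Vᵀ = 1)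
    (hΦ : Φ = U * (Matrix.of fun (i : Fin n) (j : Fin d) =>
        if (i : ℕ) = (j : ℕ) then σ j else 0) * Vᵀ)
    (hdesc : ∀ i j : Fin d, i ≤ j → σ j ≤ σ i)
    (hσpos : ∀ i : Fin d, 0 < σ i)
    (σmax : ℝ) (hσmax : IsGreatest (Set.range σ) σmax)
    (η : ℝ) (hη0 : 0 < η) (hη : η < 1 / σmax ^ 2)
    (y : Fin n → ℝ)
    (w : ℕ → Fin d → ℝ) (hw0 : w 0 = 0)
    (hw : ∀ t, w (t + 1) = w t - η • (Φᵀ.mulVec (Φ.mulVec (w t) - y)))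
    (τ δ : ℝ) (hτ0 : 0 < τ) (hτmax : τ ≤ σmax)
    (hδ : (∑ i ∈ Finset.univ.filter (fun i : Fin d => τ ≤ σ i),
        ((Uᵀ.mulVec y) (Fin.castLE hdn i)) ^ 2) = δ) :
    ∀ t : ℕ,
      ((∑ i, (Φ.mulVec (w 0) - y) i ^ 2) - ∑ i, (Φ.mulVec (w t) - y) i ^ 2
          ≥ δ * (1 - (1 - η * τ ^ 2) ^ (2 * t))) ∧
      δ * (1 - (1 - η * τ ^ 2) ^ (2 * t))
          ≥ δ * (1 - Real.exp (-(2 * (t : ℝ) * η * τ ^ 2))) :=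
  gd_alignment_loss_reduction_rate_general n d hdn Φ U V σ hU1 hU2 hV1 hΦ hσpos σmax hσmax η hη0 hη
    y w hw0 hw τ δ hτ0 hτmax hδ
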